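/- arXiv:2202.00987 — 4 statements merged into one kernel-verified Lean document; each statement's English description precedes it below -/
import Mathlib

section
/- Let G be a finite abelian group of exponent n, A ⊆ G\{0} with A = −A, and K a subfield of Q(ζ_{4n}). Set H = η(Gal(Q(ζ_{4n})/K)) ⊆ (Z/4nZ)^*, where η is the isomorphism Gal(Q(ζ_{4n})/Q) ≅ (Z/4nZ)^* given by σ(ζ_{4n}) = ζ_{4n}^{η(σ)}. Then λ_g = Σ_{a∈A} χ_g(a) lies in K for all g ∈ G if and only if hA = A for all h ∈ H. -/
open Finset Pointwise Polynomial

/-- The standard isomorphism `η : Gal(ℚ(ζ_m)/ℚ) ≅ (ℤ/mℤ)ˣ`, with `σ ζ_m = ζ_m ^ η σ`. -/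
noncomputable def etaIso (m : ℕ+) :
    (CyclotomicField m ℚ ≃ₐ[ℚ] CyclotomicField m ℚ) ≃* (ZMod (m : ℕ))ˣ :=
  @IsCyclotomicExtension.autEquivPow _ _ _ _ _ _ _ _
    (CyclotomicField.isCyclotomicExtension (m : ℕ) ℚ) (Polynomial.cyclotomic.irreducible_rat m.pos)

/-!
The values of the characters of `G` are `4n`-th roots of unity, so an automorphism `σ` of
`ℚ(ζ_{4n})` with `η σ = h` maps `∑_{a ∈ A} ψ a` to `∑_{a ∈ hA} ψ a`. By Galois theory the sums lie
in `K` iff they are fixed by `Gal(ℚ(ζ_{4n})/K)`, that is iff `∑_{hA} ψ = ∑_A ψ` for every character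
`ψ`; the injective family `χ` exhausts the `|G|` characters of `G`, and a subset of `G` is
determined by its character sums (Dedekind's lemma applied to the evaluation characters of the
dual group).
-/

open Function

theorem LinearIndependent.eq_of_sum_eq_sum {ι R M : Type*} [Semiring R] [Nontrivial R]
    [AddCommMonoid M] [Module R M] {v : ι → M} (hv : LinearIndependent R v) {s t : Finset ι}
    (h : ∑ i ∈ s, v i = ∑ i ∈ t, v i) : s = t := by
  classical
  ext i
  have key := linearIndependent_iff''ₛ.1 hv (s ∪ t) (fun j => if j ∈ s then 1 else 0)
    (fun j => if j ∈ t then 1 else 0) (fun j hj => by simp_all)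
    (by simpa only [ite_smul, one_smul, zero_smul, sum_ite_mem, union_inter_cancel_left,
      union_inter_cancel_right] using h) i
  by_cases hs : i ∈ s <;> by_cases ht : i ∈ t <;> simp_all

namespace AddChar

variable {G L : Type*} [AddCommGroup G]

theorem linearIndependent_of_isDomain [CommRing L] [IsDomain L] :
    LinearIndependent L (fun ψ : AddChar G L => (ψ : G → L)) :=
  (linearIndependent_monoidHom (Multiplicative G) L).comp toMonoidHomEquiv
    toMonoidHomEquiv.injective

def toUnitsHomEquiv [CommMonoid L] : AddChar G L ≃ (Multiplicative G →* Lˣ) :=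
  toMonoidHomEquiv.trans MonoidHom.toHomUnitsMulEquiv.toEquiv

variable [Finite G] [CommMonoid L] [HasEnoughRootsOfUnity L (AddMonoid.exponent G)]

instance : HasEnoughRootsOfUnity L (Monoid.exponent (Multiplicative G)) :=
  inferInstanceAs (HasEnoughRootsOfUnity L (AddMonoid.exponent G))

theorem natCard_eq : Nat.card (AddChar G L) = Nat.card G :=
  (Nat.card_congr toUnitsHomEquiv).trans
    (CommGroup.card_monoidHom_of_hasEnoughRootsOfUnity (Multiplicative G) L)

theorem surjective_of_injective {f : G → AddChar G L} (hf : Injective f) : Surjective f :=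
  have : Finite (AddChar G L) := Nat.finite_of_card_ne_zero (natCard_eq.trans_ne Nat.card_pos.ne')
  (hf.bijective_of_nat_card_le natCard_eq.le).surjective

theorem eq_of_forall_apply_eq {a b : G} (h : ∀ ψ : AddChar G L, ψ a = ψ b) : a = b := by
  refine Multiplicative.ofAdd.injective <|
    (CommGroup.forall_apply_eq_apply_iff (Multiplicative G) (M := L)).1 fun φ => ?_
  obtain ⟨ψ, rfl⟩ := toUnitsHomEquiv.surjective φ
  exact Units.ext (h ψ)

end AddChar

/-- The evaluation maps `ψ ↦ ψ a` are distinct characters of the group of characters, hence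
linearly independent by Dedekind's lemma. -/
theorem Finset.eq_of_forall_sum_addChar_eq {G L : Type*} [AddCommGroup G] [Finite G] [Field L]
    [HasEnoughRootsOfUnity L (AddMonoid.exponent G)] {B C : Finset G}
    (h : ∀ ψ : AddChar G L, ∑ a ∈ B, ψ a = ∑ a ∈ C, ψ a) : B = C := by
  have hli := (AddChar.linearIndependent_of_isDomain (G := AddChar G L) (L := L)).comp
    AddChar.doubleDualEmb fun a b hab => AddChar.eq_of_forall_apply_eq fun ψ =>
      DFunLike.congr_fun hab ψ
  exact hli.eq_of_sum_eq_sum (funext fun ψ => by simpa using h ψ)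

theorem ZMod.injective_val_nsmul {G : Type*} [AddCommGroup G] {m : ℕ} [NeZero m]
    (hm : ∀ a : G, m • a = 0) (u : (ZMod m)ˣ) : Injective fun a : G => (u : ZMod m).val • a := by
  let := AddCommGroup.zmodModule hm
  simpa only [← Nat.cast_smul_eq_nsmul (ZMod m), ZMod.natCast_zmod_val, ← Units.smul_def]
    using MulAction.injective u

theorem IsGalois.mem_iff_forall_mem_fixingSubgroup {F E : Type*} [Field F] [Field E]
    [Algebra F E] [FiniteDimensional F E] [IsGalois F E] (K : IntermediateField F E) (x : E) :
    x ∈ K ↔ ∀ σ ∈ K.fixingSubgroup, σ x = x := by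
  conv_lhs => rw [← IsGalois.fixedField_fixingSubgroup K]
  exact IntermediateField.mem_fixedField_iff _ x

namespace CyclotomicField

/-- Instance search finds the `ℚ`-algebra structure `DivisionRing.toRatAlgebra`, which is not
reducibly equal to the `CyclotomicField.algebra` of Mathlib's instance. -/
instance isCyclotomicExtension_rat (m : ℕ+) :
    IsCyclotomicExtension {(m : ℕ)} ℚ (CyclotomicField m ℚ) :=
  CyclotomicField.isCyclotomicExtension (m : ℕ) ℚ

theorem hasEnoughRootsOfUnity_of_dvd {m : ℕ+} {d : ℕ} (hd : d ∣ m) :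
    HasEnoughRootsOfUnity (CyclotomicField m ℚ) d :=
  have : HasEnoughRootsOfUnity (CyclotomicField m ℚ) m :=
    ⟨⟨_, IsCyclotomicExtension.zeta_spec _ ℚ _⟩, rootsOfUnity.isCyclic _ _⟩
  .of_dvd _ hd

end CyclotomicField

theorem etaIso_apply_of_pow_eq_one (m : ℕ+) (σ : CyclotomicField m ℚ ≃ₐ[ℚ] CyclotomicField m ℚ)
    {x : CyclotomicField m ℚ} (hx : x ^ (m : ℕ) = 1) :
    σ x = x ^ (etaIso m σ : ZMod m).val := by
  have hζ := IsCyclotomicExtension.zeta_spec (m : ℕ) ℚ (CyclotomicField m ℚ)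
  obtain ⟨i, -, rfl⟩ := hζ.eq_pow_of_pow_eq_one hx
  rw [map_pow, ← hζ.autToPow_spec ℚ σ, ← pow_mul, ← pow_mul, mul_comm]
  rfl

theorem etaIso_map_sum_addChar {m : ℕ+} {G : Type*} [AddCommGroup G] [DecidableEq G]
    (hm : ∀ a : G, (m : ℕ) • a = 0) (σ : CyclotomicField m ℚ ≃ₐ[ℚ] CyclotomicField m ℚ)
    (ψ : AddChar G (CyclotomicField m ℚ)) (A : Finset G) :
    σ (∑ a ∈ A, ψ a) = ∑ a ∈ A.image ((etaIso m σ : ZMod m).val • ·), ψ a := by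
  rw [map_sum, sum_image fun a _ b _ hab => ZMod.injective_val_nsmul hm _ hab]
  refine sum_congr rfl fun a _ => ?_
  have hψa : ψ a ^ (m : ℕ) = 1 := by
    rw [← AddChar.map_nsmul_eq_pow, hm, AddChar.map_zero_eq_one]
  rw [etaIso_apply_of_pow_eq_one m σ hψa, AddChar.map_nsmul_eq_pow]

theorem forall_sum_addChar_mem_iff_image_etaIso_eq {m : ℕ+} {G : Type*} [AddCommGroup G]
    [Finite G] [DecidableEq G] (hm : ∀ a : G, (m : ℕ) • a = 0) (A : Finset G)
    (K : IntermediateField ℚ (CyclotomicField m ℚ)) :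
    (∀ ψ : AddChar G (CyclotomicField m ℚ), ∑ a ∈ A, ψ a ∈ K) ↔
      ∀ σ ∈ K.fixingSubgroup, A.image ((etaIso m σ : ZMod m).val • ·) = A := by
  have := CyclotomicField.hasEnoughRootsOfUnity_of_dvd
    (AddMonoid.exponent_dvd_iff_forall_nsmul_eq_zero.2 hm)
  have := IsCyclotomicExtension.isGalois {(m : ℕ)} ℚ (CyclotomicField m ℚ)
  have := IsCyclotomicExtension.finiteDimensional {(m : ℕ)} ℚ (CyclotomicField m ℚ)
  simp only [IsGalois.mem_iff_forall_mem_fixingSubgroup K, etaIso_map_sum_addChar hm]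
  exact ⟨fun h σ hσ => eq_of_forall_sum_addChar_eq fun ψ => h ψ σ hσ,
    fun h ψ σ hσ => by rw [h σ hσ]⟩

theorem lam_mem_iff_stabilizes_general (n : ℕ+) {G : Type*} [AddCommGroup G]
    [Fintype G] [DecidableEq G]
    (hexp : AddMonoid.exponent G = n)
    (χ : G → AddChar G (CyclotomicField (4 * n) ℚ))
    (hinj : Function.Injective χ)
    (A : Finset G)
    (K : IntermediateField ℚ (CyclotomicField (4 * n) ℚ)) :
    (∀ g : G, (∑ a ∈ A, χ g a) ∈ K) ↔
      ∀ σ ∈ K.fixingSubgroup,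
        A.image (fun a =>
          (((etaIso (4 * n)) σ : ZMod ((4 * n : ℕ+) : ℕ)).val • a)) = A := by
  have hdvd : AddMonoid.exponent G ∣ ((4 * n : ℕ+) : ℕ) := by
    rw [hexp, PNat.mul_coe]
    exact dvd_mul_left _ _
  have : HasEnoughRootsOfUnity (CyclotomicField (4 * n) ℚ) (AddMonoid.exponent G) :=
    CyclotomicField.hasEnoughRootsOfUnity_of_dvd (m := 4 * n) hdvd
  rw [← (AddChar.surjective_of_injective hinj).forall (p := fun ψ => ∑ a ∈ A, ψ a ∈ K)]
  exact forall_sum_addChar_mem_iff_image_etaIso_eq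
    (AddMonoid.exponent_dvd_iff_forall_nsmul_eq_zero.1 hdvd) A K

theorem lam_mem_iff_stabilizes (n : ℕ+) {G : Type*} [AddCommGroup G]
    [Fintype G] [DecidableEq G]
    (hexp : AddMonoid.exponent G = n)
    (χ : G → AddChar G (CyclotomicField (4 * n) ℚ))
    (hmul : ∀ g h x : G, χ (g + h) x = χ g x * χ h x)
    (hinj : Function.Injective χ)
    (A : Finset G) (hA0 : (0 : G) ∉ A) (hA : -A = A)
    (K : IntermediateField ℚ (CyclotomicField (4 * n) ℚ)) :
    (∀ g : G, (∑ a ∈ A, χ g a) ∈ K) ↔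
      ∀ σ ∈ K.fixingSubgroup,
        A.image (fun a =>
          (((etaIso (4 * n)) σ : ZMod ((4 * n : ℕ+) : ℕ)).val • a)) = A :=
  lam_mem_iff_stabilizes_general n hexp χ hinj A K
end

section
/- Let G be a finite abelian group of exponent n and S ⊆ G\{0} with S = −S. Let H = {h ∈ (Z/4nZ)^* : hS = S} and H' = {h' ∈ (Z/nZ)^* : h'S = S}. Then φ(4n)/|H| = φ(n)/|H'|. -/
/-!
Reduction mod `n` maps `(ZMod (4 * n))ˣ` onto `(ZMod n)ˣ`, and since `n` kills `G`, a unit mod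
`4 * n` acts on `G` exactly as its reduction does. Hence `H` is the full preimage of `H'`, so
`|H| = |H'| * |K|` for the kernel `K` of the reduction, while likewise `φ (4 * n) = φ n * |K|`.
-/

open Finset Pointwise

theorem MonoidHom.card_preimage_of_surjective {A B : Type*} [Group A] [Group B] {f : A →* B}
    (hf : Function.Surjective f) (T : Set B) :
    Nat.card (f ⁻¹' T) = Nat.card T * Nat.card f.ker := by
  rw [← Nat.card_prod]
  exact Nat.card_congr <| (Equiv.sigmaSubtypeFiberEquivSubtype f fun _ => Iff.rfl).symm.trans <|
    (Equiv.sigmaCongrRight fun b : T => f.fiberEquivKerOfSurjective hf b).trans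
      (Equiv.sigmaEquivProd _ _)

theorem ZMod.val_cast_nsmul_of_exponent_dvd {G : Type*} [AddMonoid G] {m n : ℕ} [NeZero m]
    (hG : AddMonoid.exponent G ∣ n) (a : ZMod m) (g : G) :
    (a.cast : ZMod n).val • g = a.val • g := by
  rw [ZMod.cast_eq_val, ZMod.val_natCast, AddMonoid.nsmul_eq_mod_exponent,
    Nat.mod_mod_of_dvd _ hG, ← AddMonoid.nsmul_eq_mod_exponent]

theorem totient_div_stabilizer_eq_general (n : ℕ) (hn : 0 < n) {G : Type*} [AddCommGroup G]
    [DecidableEq G]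
    (hexp : AddMonoid.exponent G = n)
    (S : Finset G) :
    Nat.totient (4 * n) /
        Nat.card {h : (ZMod (4 * n))ˣ //
          S.image (fun s => (h : ZMod (4 * n)).val • s) = S}
      = Nat.totient n /
        Nat.card {h' : (ZMod n)ˣ //
          S.image (fun s => (h' : ZMod n).val • s) = S} := by
  have : NeZero n := ⟨hn.ne'⟩
  set f := ZMod.unitsMap (dvd_mul_left n 4)
  have hf : Function.Surjective f := ZMod.unitsMap_surjective _
  set T : Set (ZMod n)ˣ := {h' | S.image (fun s => (h' : ZMod n).val • s) = S}
  have hstab :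
      Nat.card {h : (ZMod (4 * n))ˣ // S.image (fun s => (h : ZMod (4 * n)).val • s) = S} =
        Nat.card (f ⁻¹' T) :=
    Nat.card_congr <| Equiv.subtypeEquivRight fun h => by
      simp only [Set.mem_preimage, T, f, Set.mem_ofPred_eq, ZMod.unitsMap_val,
        ZMod.val_cast_nsmul_of_exponent_dvd hexp.dvd]
  have htot : Nat.totient (4 * n) = Nat.totient n * Nat.card f.ker := by
    simpa [Nat.card_eq_fintype_card, ZMod.card_units_eq_totient] using
      MonoidHom.card_preimage_of_surjective hf Set.univ
  rw [hstab, htot, MonoidHom.card_preimage_of_surjective hf T,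
    Nat.mul_div_mul_right _ _ Nat.card_pos]
  rfl

theorem totient_div_stabilizer_eq (n : ℕ) (hn : 0 < n) {G : Type*} [AddCommGroup G]
    [Fintype G] [DecidableEq G]
    (hexp : AddMonoid.exponent G = n)
    (S : Finset G) (hS0 : (0 : G) ∉ S) (hS : -S = S) :
    Nat.totient (4 * n) /
        Nat.card {h : (ZMod (4 * n))ˣ //
          S.image (fun s => (h : ZMod (4 * n)).val • s) = S}
      = Nat.totient n /
        Nat.card {h' : (ZMod n)ˣ //
          S.image (fun s => (h' : ZMod n).val • s) = S} :=
  totient_div_stabilizer_eq_general n hn hexp S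
end

section
/- Let G be a finite abelian group of exponent n with 4 ∤ n, and let B ⊆ G\{0} with B ∩ (−B) = ∅. If kB = B for every k ∈ (Z/4nZ)^* with k ≡ 1 (mod 4), then B = ∅. -/
/-! Take `k ≡ 1 [MOD 4]` with `k ≡ -1 [MOD n]` (`2n - 1` for odd `n`, `n - 1` for `n ≡ 2 [MOD 4]`).
It is a unit modulo `4n` and acts on `G` as negation, so `B = k • B = -B`, which is disjoint
from `B`. -/

open Finset Pointwise

theorem nsmul_eq_neg_of_exponent_dvd_succ {G : Type*} [AddGroup G] {k : ℕ}
    (h : AddMonoid.exponent G ∣ k + 1) (g : G) : k • g = -g :=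
  eq_neg_of_add_eq_zero_left <| by
    rw [← succ_nsmul]
    exact AddMonoid.exponent_dvd_iff_forall_nsmul_eq_zero.mp h g

theorem Nat.exists_lt_four_mul_mod_four_eq_one_dvd_succ {n : ℕ} (h4 : ¬ 4 ∣ n) :
    ∃ k < 4 * n, k % 4 = 1 ∧ n ∣ k + 1 := by
  rcases Nat.even_or_odd n with ⟨m, rfl⟩ | ⟨m, rfl⟩
  · exact ⟨2 * m - 1, by omega, by omega, ⟨1, by omega⟩⟩
  · exact ⟨4 * m + 1, by omega, by omega, ⟨2, by omega⟩⟩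

theorem Nat.coprime_mul_of_mod_eq_one_of_dvd_succ {k m n : ℕ} (hm : k % m = 1)
    (hn : n ∣ k + 1) : k.Coprime (m * n) := by
  have hkm : k.Coprime m := by
    rw [Nat.Coprime, Nat.gcd_comm, Nat.gcd_rec, hm, Nat.gcd_one_left]
  have hkn : k.Coprime n :=
    (Nat.coprime_self_add_right.mpr (Nat.coprime_one_right k)).coprime_dvd_right hn
  exact hkm.mul_right hkn

theorem ZMod.exists_unit_val_mod_four_eq_one_dvd_succ {n : ℕ} (h4 : ¬ 4 ∣ n) :
    ∃ u : (ZMod (4 * n))ˣ, (u : ZMod (4 * n)).val % 4 = 1 ∧ n ∣ (u : ZMod (4 * n)).val + 1 := by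
  obtain ⟨k, hk, hk4, hkn⟩ := Nat.exists_lt_four_mul_mod_four_eq_one_dvd_succ h4
  refine ⟨ZMod.unitOfCoprime k (Nat.coprime_mul_of_mod_eq_one_of_dvd_succ hk4 hkn), ?_⟩
  rw [ZMod.coe_unitOfCoprime, ZMod.val_natCast, Nat.mod_eq_of_lt hk]
  exact ⟨hk4, hkn⟩

theorem B_empty_of_not_four_dvd_general (n : ℕ) {G : Type*} [AddCommGroup G]
    [DecidableEq G]
    (hexp : AddMonoid.exponent G = n) (h4 : ¬ (4 ∣ n))
    (B : Finset G) (hB : B ∩ -B = ∅)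
    (hstab : ∀ k : (ZMod (4 * n))ˣ, (k : ZMod (4 * n)).val % 4 = 1 →
      B.image (fun b => (k : ZMod (4 * n)).val • b) = B) :
    B = ∅ := by
  subst hexp
  obtain ⟨u, hu4, hun⟩ := ZMod.exists_unit_val_mod_four_eq_one_dvd_succ h4
  have hneg : -B = B := by
    rw [← image_neg_eq_neg, ← funext (nsmul_eq_neg_of_exponent_dvd_succ hun)]
    exact hstab u hu4
  rwa [hneg, inter_self] at hB

theorem B_empty_of_not_four_dvd (n : ℕ) (hn : 0 < n) {G : Type*} [AddCommGroup G]
    [Fintype G] [DecidableEq G]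
    (hexp : AddMonoid.exponent G = n) (h4 : ¬ (4 ∣ n))
    (B : Finset G) (hB0 : (0 : G) ∉ B) (hB : B ∩ -B = ∅)
    (hstab : ∀ k : (ZMod (4 * n))ˣ, (k : ZMod (4 * n)).val % 4 = 1 →
      B.image (fun b => (k : ZMod (4 * n)).val • b) = B) :
    B = ∅ :=
  B_empty_of_not_four_dvd_general n hexp h4 B hB hstab
end

section
/- Let G be a finite abelian group of exponent n with 4 | n, and let B ⊆ G\{0} with B ∩ (−B) = ∅. If kB = B for every k ∈ (Z/4nZ)^* with k ≡ 1 (mod 4), then every element of B has order divisible by 4. -/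
/-!
Write `n = 2^ℓ m` with `m` odd. The integer `k = 2m - 1` is a unit modulo `4n`
with `k ≡ 1 (mod 4)`, and every divisor of `n` not divisible by `4` divides `k + 1 = 2m`.
So if `x ∈ B` had order not divisible by `4`, then `k • x = -x`, and `kB = B` would put `-x`
in `B`, contradicting `B ∩ (-B) = ∅`.
-/

open Finset Pointwise

namespace Nat

theorem dvd_two_mul_ordCompl_of_dvd {d n : ℕ} (hdn : d ∣ n) (h4 : ¬ 4 ∣ d) :
    d ∣ 2 * ordCompl[2] n := by
  have hd : d ≠ 0 := by rintro rfl; exact h4 (dvd_zero 4)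
  have hv : d.factorization 2 ≤ 1 := by
    by_contra! hv
    exact h4 ((prime_two.pow_dvd_iff_le_factorization (k := 2) hd).2 hv)
  calc d = 2 ^ d.factorization 2 * ordCompl[2] d := (ordProj_mul_ordCompl_eq_self d 2).symm
    _ ∣ 2 ^ 1 * ordCompl[2] n :=
      mul_dvd_mul (pow_dvd_pow 2 hv) (ordCompl_dvd_ordCompl_of_dvd hdn 2)
    _ = 2 * ordCompl[2] n := by rw [pow_one]

theorem coprime_two_mul_ordCompl_sub_one {n : ℕ} (hn : n ≠ 0) :
    Coprime (2 * ordCompl[2] n - 1) (4 * n) := by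
  set ℓ := n.factorization 2
  set m := ordCompl[2] n
  have hm : 0 < m := ordCompl_pos 2 hn
  have hconsec : Coprime (2 * m - 1) (2 * m) := by
    have h := coprime_add_self_right.2 (coprime_one_right (2 * m - 1))
    rwa [show 1 + (2 * m - 1) = 2 * m by omega] at h
  have hdvd : 4 * n ∣ (2 * m) ^ (ℓ + 2) := by
    calc 4 * n = 2 ^ (ℓ + 2) * m := by rw [← ordProj_mul_ordCompl_eq_self n 2]; ring
      _ ∣ 2 ^ (ℓ + 2) * m ^ (ℓ + 2) := mul_dvd_mul_left _ (dvd_pow_self m (by omega))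
      _ = (2 * m) ^ (ℓ + 2) := (mul_pow 2 m _).symm
  exact (hconsec.pow_right _).coprime_dvd_right hdvd

theorem two_mul_ordCompl_sub_one_mod_four {n : ℕ} (hn : n ≠ 0) :
    (2 * ordCompl[2] n - 1) % 4 = 1 := by
  have := not_dvd_ordCompl prime_two hn
  omega

end Nat

theorem exists_unit_mod_four_eq_one_forall_dvd_val_succ {n : ℕ} (hn : n ≠ 0) :
    ∃ k : (ZMod (4 * n))ˣ, (k : ZMod (4 * n)).val % 4 = 1 ∧
      ∀ d, d ∣ n → ¬ 4 ∣ d → d ∣ (k : ZMod (4 * n)).val + 1 := by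
  have hval : ((2 * ordCompl[2] n - 1 : ℕ) : ZMod (4 * n)).val = 2 * ordCompl[2] n - 1 :=
    ZMod.val_cast_of_lt (by have := Nat.ordCompl_le n 2; omega)
  refine ⟨ZMod.unitOfCoprime _ (Nat.coprime_two_mul_ordCompl_sub_one hn), ?_, ?_⟩
  · rw [ZMod.coe_unitOfCoprime, hval]
    exact Nat.two_mul_ordCompl_sub_one_mod_four hn
  · intro d hdn h4
    rw [ZMod.coe_unitOfCoprime, hval, Nat.sub_add_cancel (by have := Nat.ordCompl_pos 2 hn; omega)]
    exact Nat.dvd_two_mul_ordCompl_of_dvd hdn h4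

theorem nsmul_eq_neg_of_addOrderOf_dvd_succ {G : Type*} [AddGroup G] {x : G} {k : ℕ}
    (h : addOrderOf x ∣ k + 1) : k • x = -x :=
  eq_neg_of_add_eq_zero_left (by rw [← succ_nsmul, addOrderOf_dvd_iff_nsmul_eq_zero.1 h])

theorem order_four_dvd_of_stabilized_general (n : ℕ) (hn : 0 < n) {G : Type*} [AddCommGroup G]
    [DecidableEq G]
    (hexp : AddMonoid.exponent G = n)
    (B : Finset G) (hB : B ∩ -B = ∅)
    (hstab : ∀ k : (ZMod (4 * n))ˣ, (k : ZMod (4 * n)).val % 4 = 1 →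
      B.image (fun b => (k : ZMod (4 * n)).val • b) = B) :
    ∀ x ∈ B, 4 ∣ addOrderOf x := by
  intro x hx
  by_contra hx4
  obtain ⟨k, hk4, hkdvd⟩ := exists_unit_mod_four_eq_one_forall_dvd_val_succ hn.ne'
  have hxn : addOrderOf x ∣ n := hexp ▸ AddMonoid.addOrder_dvd_exponent x
  have hkx : (k : ZMod (4 * n)).val • x = -x :=
    nsmul_eq_neg_of_addOrderOf_dvd_succ (hkdvd _ hxn hx4)
  have hnegx : -x ∈ B := by
    rw [← hstab k hk4, ← hkx]
    exact mem_image_of_mem _ hx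
  have : x ∈ B ∩ -B := mem_inter.2 ⟨hx, mem_neg.2 ⟨-x, hnegx, neg_neg x⟩⟩
  simp [hB] at this

theorem order_four_dvd_of_stabilized (n : ℕ) (hn : 0 < n) {G : Type*} [AddCommGroup G]
    [Fintype G] [DecidableEq G]
    (hexp : AddMonoid.exponent G = n) (h4 : 4 ∣ n)
    (B : Finset G) (hB0 : (0 : G) ∉ B) (hB : B ∩ -B = ∅)
    (hstab : ∀ k : (ZMod (4 * n))ˣ, (k : ZMod (4 * n)).val % 4 = 1 →
      B.image (fun b => (k : ZMod (4 * n)).val • b) = B) :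
    ∀ x ∈ B, 4 ∣ addOrderOf x :=
  order_four_dvd_of_stabilized_general n hn hexp B hB hstab
end
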